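/- Let X be a CAT(0) cube complex and w a hyperplane. A hyperplane u belongs to I(w) (the intersection of all sets W_v over vertices v adjacent to w) if and only if u is transverse to w and to every other hyperplane transverse to w. Consequently, the elements of I(w) are pairwise transverse and #I(w) ≤ dim X. -/

import Mathlib

open SimpleGraph

variable {V : Type*}

/-- A median graph: combinatorial model of (the 1-skeleton of) a CAT(0) cube complex. -/
def IsMedianGraph (G : SimpleGraph V) : Prop :=
  G.Connected ∧ ∀ x y z : V, ∃! m : V,
    G.dist x m + G.dist m y = G.dist x y ∧
    G.dist x m + G.dist m z = G.dist x z ∧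
    G.dist y m + G.dist m z = G.dist y z

/-- Djoković–Winkler relation on oriented edges of a median graph; hyperplanes are its classes. -/
def Theta (G : SimpleGraph V) (e f : V × V) : Prop :=
  G.dist e.1 f.1 + G.dist e.2 f.2 ≠ G.dist e.1 f.2 + G.dist e.2 f.1

/-- A hyperplane, identified with the set of (oriented) edges crossing it. -/
def IsHyperplane (G : SimpleGraph V) (h : Set (V × V)) : Prop :=
  ∃ e : V × V, G.Adj e.1 e.2 ∧ h = {f | G.Adj f.1 f.2 ∧ Theta G e f}

/-- The hyperplane `h` is adjacent to the vertex `v` (i.e. `v` lies in the carrier of `h`). -/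
def AdjTo (G : SimpleGraph V) (h : Set (V × V)) (v : V) : Prop :=
  ∃ e ∈ h, e.1 = v ∨ e.2 = v

/-- `Wv G v`: the set of hyperplanes adjacent to `v`. -/
def Wv (G : SimpleGraph V) (v : V) : Set (Set (V × V)) :=
  {h | IsHyperplane G h ∧ AdjTo G h v}

/-- Two hyperplanes are in contact if their carriers share a vertex. -/
def Contact (G : SimpleGraph V) (h h' : Set (V × V)) : Prop :=
  ∃ v : V, AdjTo G h v ∧ AdjTo G h' v

/-- Two hyperplanes are transverse if they cross a common square. -/
def Transverse (G : SimpleGraph V) (h h' : Set (V × V)) : Prop :=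
  ∃ a b c d : V, (a, b) ∈ h ∧ (c, d) ∈ h ∧ (a, c) ∈ h' ∧ (b, d) ∈ h' ∧
    G.Adj a b ∧ G.Adj c d ∧ G.Adj a c ∧ G.Adj b d

/-- A clique in the contact graph: a set of hyperplanes whose carriers pairwise intersect. -/
def IsContactClique (G : SimpleGraph V) (C : Set (Set (V × V))) : Prop :=
  (∀ h ∈ C, IsHyperplane G h) ∧ ∀ h ∈ C, ∀ h' ∈ C, h ≠ h' → Contact G h h'

/-- A maximal clique in the contact graph. -/
def IsMaxContactClique (G : SimpleGraph V) (C : Set (Set (V × V))) : Prop :=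
  IsContactClique G C ∧ ∀ C', IsContactClique G C' → C ⊆ C' → C' = C

/-- The link of `v` is a cone, i.e. `v` is an extremal vertex. -/
def LinkIsCone (G : SimpleGraph V) (v : V) : Prop :=
  ∃ h ∈ Wv G v, ∀ h' ∈ Wv G v, h' ≠ h → Transverse G h h'

/-- Uniform local finiteness. -/
def UnifLocFinite (G : SimpleGraph V) : Prop :=
  ∃ N : ℕ, ∀ v : V, (G.neighborSet v).Finite ∧ (G.neighborSet v).ncard ≤ N

abbrev Hyp (G : SimpleGraph V) := {h : Set (V × V) // IsHyperplane G h}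

/-- The contact graph `𝒞(X)`. -/
def contactGraph (G : SimpleGraph V) : SimpleGraph (Hyp G) where
  Adj h h' := h ≠ h' ∧ Contact G h.1 h'.1
  symm := by
    refine ⟨?_⟩
    rintro h h' ⟨hne, v, hv, hv'⟩
    exact ⟨hne.symm, v, hv', hv⟩
  loopless := by refine ⟨?_⟩; rintro h ⟨hne, -⟩; exact hne rfl

/-- `Ical G w` = I(w): the hyperplanes whose carrier contains the carrier of `w`,
i.e. the intersection of the sets `Wv G v` over all vertices `v` adjacent to `w`. -/
def Ical (G : SimpleGraph V) (w : Set (V × V)) : Set (Set (V × V)) :=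
  {u | IsHyperplane G u ∧ ∀ v : V, AdjTo G w v → AdjTo G u v}

/-- `Ical0 G w` = I⁰(w): the hyperplanes with the same carrier as `w`. -/
def Ical0 (G : SimpleGraph V) (w : Set (V × V)) : Set (Set (V × V)) :=
  {u | u ∈ Ical G w ∧ w ∈ Ical G u}

/-- The action of a cubical automorphism on sets of edges (e.g. hyperplanes). -/
def hmap (G : SimpleGraph V) (φ : G ≃g G) (h : Set (V × V)) : Set (V × V) :=
  (fun e : V × V => (φ e.1, φ e.2)) '' h

/-- `π` is the vertex permutation induced by the contact-graph automorphism `ψ` via the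
correspondence between vertices and maximal cliques (`ρ(ψ) = π`). -/
def InducesPerm (G : SimpleGraph V) (ψ : contactGraph G ≃g contactGraph G)
    (π : Equiv.Perm V) : Prop :=
  ∀ (v : V) (h : Hyp G), h.1 ∈ Wv G v ↔ (ψ h).1 ∈ Wv G (π v)

/-- The hyperplane `u` is adjacent, inside the cube complex structure of a hyperplane `w`,
to the vertex of `w` given by the edge `e ∈ w`: `u` crosses a square containing `e`. -/
def HypAdjEdge (G : SimpleGraph V) (u : Set (V × V)) (e : V × V) : Prop :=
  ∃ c d : V, (e.1, c) ∈ u ∧ (e.2, d) ∈ u ∧ G.Adj c d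

/-- The link, in the cube complex structure of hyperplane `w`, of the vertex given by
`e ∈ w` is a cone (i.e. this vertex of `w` is extremal). -/
def HypLinkCone (G : SimpleGraph V) (w : Set (V × V)) (e : V × V) : Prop :=
  ∃ u, IsHyperplane G u ∧ u ≠ w ∧ HypAdjEdge G u e ∧
    ∀ u', IsHyperplane G u' → u' ≠ w → HypAdjEdge G u' e → u' ≠ u → Transverse G u u'

/-- No hyperplane of `X` has an extremal vertex. -/
def NoHypExtremalVertex (G : SimpleGraph V) : Prop :=
  ∀ w, IsHyperplane G w → ∀ e ∈ w, ¬ HypLinkCone G w e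


/-!
Halfspaces of a median graph are convex, hence so are carriers of hyperplanes. If the carrier of
`u` contains that of `w`, the two ends of an edge of `w`, or of an edge of a hyperplane `t`
crossing `w`, lie on the carrier of `u`; and an edge not dual to `u` with both ends on the carrier
of `u` spans a square with `u`, so `u` crosses `w` and `t`. Conversely, start at a square where
`u` and `w` cross and follow geodesics inside the convex carrier of `w`: each edge is dual to `u`,
to `w`, or to a hyperplane crossing `w` and hence `u`, and two crossing hyperplanes with edges at a
common vertex span a square there, so the path never leaves the carrier of `u`. Being pairwise
transverse, the elements of `I(w)` are then at most `dim X` in number.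
-/

theorem Set.finite_and_ncard_le_of_forall_finset {α : Type*} {s : Set α} {n : ℕ}
    (h : ∀ T : Finset α, (T : Set α) ⊆ s → T.card ≤ n) : s.Finite ∧ s.ncard ≤ n := by
  have hs : s.Finite := by
    by_contra hinf
    obtain ⟨T, hT, hcard⟩ := Set.Infinite.exists_subset_card_eq hinf (n + 1)
    have := h T hT
    omega
  refine ⟨hs, ?_⟩
  rw [Set.ncard_eq_toFinset_card s hs]
  exact h _ (by simp)

namespace SimpleGraph

theorem Connected.induction_on_convex {G : SimpleGraph V} (hconn : G.Connected) {S : Set V}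
    (hS : ∀ ⦃v x m⦄, v ∈ S → x ∈ S → G.dist v m + G.dist m x = G.dist v x → m ∈ S)
    {P : V → Prop} {A : V} (hA : A ∈ S) (hPA : P A)
    (step : ∀ ⦃y z⦄, y ∈ S → z ∈ S → G.Adj y z → P y → P z) {v : V} (hv : v ∈ S) : P v := by
  obtain ⟨k, hk⟩ : ∃ k, G.dist v A = k := ⟨_, rfl⟩
  induction k generalizing v with
  | zero => rwa [hconn.dist_eq_zero_iff.1 hk]
  | succ k ih =>
    obtain ⟨p, hp⟩ := exists_walk_of_dist_ne_zero (G := G) (u := v) (v := A) (by omega)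
    cases p with
    | nil => simp at hk
    | @cons _ w _ hvw q =>
      have hwA : G.dist w A ≤ k := by
        have := G.dist_le q
        rw [Walk.length_cons] at hp
        omega
      have hvA : G.dist v A ≤ G.dist v w + G.dist w A := hconn.dist_triangle
      have hvw1 : G.dist v w = 1 := dist_eq_one_iff_adj.2 hvw
      have hw : w ∈ S := hS hv hA (by omega)
      exact step hw hv hvw.symm (ih hw (by omega))

/-- For an edge `ab`, the side containing `a` of the hyperplane dual to `ab`. -/
def halfspace (G : SimpleGraph V) (a b : V) : Set V :=
  {v | G.dist v a + 1 = G.dist v b}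

def thetaClass (G : SimpleGraph V) (a b : V) : Set (V × V) :=
  {f | G.Adj f.1 f.2 ∧ Theta G (a, b) f}

variable {G : SimpleGraph V} {a b : V}

theorem mem_halfspace {v : V} : v ∈ G.halfspace a b ↔ G.dist v a + 1 = G.dist v b := Iff.rfl

theorem dist_add_dist_comm {x y z : V} (h : G.dist x y + G.dist y z = G.dist x z) :
    G.dist z y + G.dist y x = G.dist z x := by
  rw [dist_comm (u := z), dist_comm (u := y) (v := x), dist_comm (u := z)]
  omega

theorem isHyperplane_thetaClass (hab : G.Adj a b) : IsHyperplane G (G.thetaClass a b) :=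
  ⟨(a, b), hab, rfl⟩

theorem thetaClass_comm (a b : V) : G.thetaClass a b = G.thetaClass b a := by
  ext f
  simp only [thetaClass, Theta, Set.mem_ofPred_eq]
  constructor <;> exact fun h => ⟨h.1, by omega⟩

end SimpleGraph

theorem IsHyperplane.exists_eq_thetaClass {G : SimpleGraph V} {u : Set (V × V)}
    (hu : IsHyperplane G u) : ∃ a b, G.Adj a b ∧ u = G.thetaClass a b := by
  obtain ⟨⟨a, b⟩, hab, rfl⟩ := hu
  exact ⟨a, b, hab, rfl⟩

theorem Transverse.symm {G : SimpleGraph V} {u t : Set (V × V)} (h : Transverse G u t) :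
    Transverse G t u := by
  obtain ⟨A, B, C, D, h1, h2, h3, h4, a1, a2, a3, a4⟩ := h
  exact ⟨A, C, B, D, h3, h4, h1, h2, a3, a4, a1, a2⟩

namespace IsMedianGraph

variable {G : SimpleGraph V} {a b x y z : V}

theorem exists_median (hG : IsMedianGraph G) (x y z : V) : ∃ m,
    G.dist x m + G.dist m y = G.dist x y ∧ G.dist x m + G.dist m z = G.dist x z ∧
    G.dist y m + G.dist m z = G.dist y z :=
  (hG.2 x y z).exists

theorem eq_of_dist_eq_zero (hG : IsMedianGraph G) (h : G.dist x y = 0) : x = y :=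
  hG.1.dist_eq_zero_iff.1 h

/-- Median graphs are bipartite. -/
theorem dist_ne_of_adj (hG : IsMedianGraph G) (h : G.Adj x y) (z : V) :
    G.dist x z ≠ G.dist y z := by
  obtain ⟨m, h1, h2, h3⟩ := hG.exists_median x y z
  rw [dist_eq_one_iff_adj.2 h] at h1
  rcases Nat.add_eq_one_iff.1 h1 with ⟨h0, -⟩ | ⟨-, h0⟩
  · obtain rfl := hG.eq_of_dist_eq_zero h0
    rw [dist_eq_one_iff_adj.2 h.symm] at h3
    omega
  · obtain rfl := (hG.eq_of_dist_eq_zero h0).symm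
    rw [dist_eq_one_iff_adj.2 h] at h2
    omega

theorem dist_add_one_eq_or (hG : IsMedianGraph G) (hab : G.Adj a b) (v : V) :
    G.dist v a + 1 = G.dist v b ∨ G.dist v b + 1 = G.dist v a := by
  have := hG.dist_ne_of_adj hab v
  rw [dist_comm (u := a), dist_comm (u := b)] at this
  rcases hab.diff_dist_adj (u := v) with h | h | h <;> omega

theorem notMem_halfspace_iff (hG : IsMedianGraph G) (hab : G.Adj a b) {v : V} :
    v ∉ G.halfspace a b ↔ v ∈ G.halfspace b a := by
  simp only [mem_halfspace]
  have := hG.dist_add_one_eq_or hab v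
  omega

theorem mem_thetaClass_iff (hG : IsMedianGraph G) (hab : G.Adj a b) {p q : V} :
    (p, q) ∈ G.thetaClass a b ↔ G.Adj p q ∧ ¬(p ∈ G.halfspace a b ↔ q ∈ G.halfspace a b) := by
  have hp := hG.dist_add_one_eq_or hab p
  have hq := hG.dist_add_one_eq_or hab q
  simp only [thetaClass, Theta, Set.mem_ofPred_eq, mem_halfspace,
    dist_comm (u := a), dist_comm (u := b)]
  constructor <;> rintro ⟨hpq, h⟩ <;> refine ⟨hpq, ?_⟩ <;> omega

theorem mem_thetaClass_self (hG : IsMedianGraph G) (hab : G.Adj a b) :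
    (a, b) ∈ G.thetaClass a b := by
  rw [hG.mem_thetaClass_iff hab, mem_halfspace, mem_halfspace, dist_self,
    dist_eq_one_iff_adj.2 hab, dist_eq_one_iff_adj.2 hab.symm, dist_self]
  exact ⟨hab, by simp⟩

theorem swap_mem_thetaClass (hG : IsMedianGraph G) (hab : G.Adj a b) {p q : V}
    (h : (p, q) ∈ G.thetaClass a b) : (q, p) ∈ G.thetaClass a b := by
  rw [hG.mem_thetaClass_iff hab] at h ⊢
  exact ⟨h.1.symm, fun hiff => h.2 hiff.symm⟩

/-- Otherwise `y` and the median of `x, z, a` would be two distinct medians of `x, z, b`. -/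
theorem mem_halfspace_of_between_of_dist_eq_one (hG : IsMedianGraph G) (hab : G.Adj a b)
    (hx : x ∈ G.halfspace a b) (hz : z ∈ G.halfspace a b)
    (hxy : G.dist x y = 1) (hyz : G.dist y z = 1) (hxz : G.dist x z = 2) :
    y ∈ G.halfspace a b := by
  by_contra hy
  rw [hG.notMem_halfspace_iff hab] at hy
  rw [mem_halfspace] at hx hz hy
  have hab1 := dist_eq_one_iff_adj.2 hab
  have hzy : G.dist z y = 1 := by rw [dist_comm]; exact hyz
  have t1 : G.dist x b ≤ G.dist x y + G.dist y b := hG.1.dist_triangle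
  have t2 : G.dist y a ≤ G.dist y x + G.dist x a := hG.1.dist_triangle
  have t3 : G.dist z b ≤ G.dist z y + G.dist y b := hG.1.dist_triangle
  have t4 : G.dist y a ≤ G.dist y z + G.dist z a := hG.1.dist_triangle
  have hyx : G.dist y x = 1 := by rw [dist_comm]; exact hxy
  obtain ⟨q, q1, q2, q3⟩ := hG.exists_median x z a
  have hqz : G.dist q z = G.dist z q := dist_comm
  have hxq : G.dist x q ≠ 0 := fun h => by
    obtain rfl := hG.eq_of_dist_eq_zero h; omega
  have hqz' : G.dist q z ≠ 0 := fun h => by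
    obtain rfl := hG.eq_of_dist_eq_zero h; omega
  have t5 : G.dist q b ≤ G.dist q a + G.dist a b := hG.1.dist_triangle
  have t6 : G.dist x b ≤ G.dist x q + G.dist q b := hG.1.dist_triangle
  have t7 : G.dist z b ≤ G.dist z q + G.dist q b := hG.1.dist_triangle
  have hqy := (hG.2 x z b).unique (y₁ := q) (y₂ := y)
    ⟨by omega, by omega, by omega⟩ ⟨by omega, by omega, by omega⟩
  subst hqy
  omega

theorem between_or_exists_closer (hG : IsMedianGraph G) (hab : G.Adj a b)
    (hy : y ∉ G.halfspace a b) (hxyz : G.dist x y + G.dist y z = G.dist x z) :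
    G.dist x y + G.dist y b = G.dist x b ∨ ∃ m ∉ G.halfspace a b,
      G.dist x m + G.dist m z = G.dist x z ∧ G.dist m b < G.dist y b := by
  obtain ⟨m, h1, h2, h3⟩ := hG.exists_median x y b
  by_cases hmy : m = y
  · subst hmy
    exact .inl h2
  refine .inr ⟨m, fun hm => ?_, ?_, ?_⟩
  · rw [hG.notMem_halfspace_iff hab, mem_halfspace] at hy
    have : G.dist y a ≤ G.dist y m + G.dist m a := hG.1.dist_triangle
    rw [mem_halfspace] at hm
    omega
  · have : G.dist x z ≤ G.dist x m + G.dist m z := hG.1.dist_triangle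
    have : G.dist m z ≤ G.dist m y + G.dist y z := hG.1.dist_triangle
    have : G.dist y m = G.dist m y := dist_comm
    omega
  · have : G.dist y m ≠ 0 := fun h => hmy (hG.eq_of_dist_eq_zero h).symm
    omega

theorem exists_mem_halfspace_closer (hG : IsMedianGraph G) (hab : G.Adj a b)
    (hx : x ∈ G.halfspace a b) (hxyb : G.dist x y + G.dist y b = G.dist x b)
    (hxy : 2 ≤ G.dist x y) : ∃ x' ∈ G.halfspace a b,
      G.dist x x' + G.dist x' y = G.dist x y ∧ G.dist x' y < G.dist x y := by
  obtain ⟨x', h1, h2, h3⟩ := hG.exists_median x y a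
  rw [mem_halfspace] at hx
  have hx'b : G.dist x b ≤ G.dist x x' + G.dist x' b := hG.1.dist_triangle
  have hx' := hG.dist_add_one_eq_or hab x'
  have hy := hG.dist_add_one_eq_or hab y
  have hxx' : G.dist x x' ≠ 0 := fun h => by
    obtain rfl := hG.eq_of_dist_eq_zero h
    have : G.dist y x = G.dist x y := dist_comm
    omega
  exact ⟨x', by rw [mem_halfspace]; omega, h1, by omega⟩

/-- By induction on `d(y, b) + d(x, z)`: a counterexample `y` is first moved onto geodesics from
`x` and `z` to `b`, after which `x` and `z` can be moved towards `y` until both are adjacent to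
it. -/
theorem mem_halfspace_of_between (hG : IsMedianGraph G) (hab : G.Adj a b)
    (hx : x ∈ G.halfspace a b) (hz : z ∈ G.halfspace a b)
    (hxyz : G.dist x y + G.dist y z = G.dist x z) : y ∈ G.halfspace a b := by
  by_contra hy
  obtain ⟨N, hN⟩ : ∃ N, G.dist y b + G.dist x z = N := ⟨_, rfl⟩
  induction N using Nat.strong_induction_on generalizing x y z with
  | _ N ih =>
  have hzx : G.dist z x = G.dist x z := dist_comm
  have hzyx := dist_add_dist_comm hxyz
  rcases hG.between_or_exists_closer hab hy hxyz with hxyb | ⟨m, hm, hxmz, hmb⟩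
  swap
  · exact ih _ (by omega) hx hz hxmz hm rfl
  rcases hG.between_or_exists_closer hab hy hzyx with hzyb | ⟨m, hm, hzmx, hmb⟩
  swap
  · exact ih _ (by omega) hz hx hzmx hm rfl
  by_cases hxy : 2 ≤ G.dist x y
  · obtain ⟨x', hx', hxx'y, hlt⟩ := hG.exists_mem_halfspace_closer hab hx hxyb hxy
    have : G.dist x z ≤ G.dist x x' + G.dist x' z := hG.1.dist_triangle
    have : G.dist x' z ≤ G.dist x' y + G.dist y z := hG.1.dist_triangle
    exact ih _ (by omega) hx' hz (by omega) hy rfl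
  by_cases hzy : 2 ≤ G.dist z y
  · obtain ⟨z', hz', hzz'y, hlt⟩ := hG.exists_mem_halfspace_closer hab hz hzyb hzy
    have : G.dist z x ≤ G.dist z z' + G.dist z' x := hG.1.dist_triangle
    have : G.dist z' x ≤ G.dist z' y + G.dist y x := hG.1.dist_triangle
    exact ih _ (by omega) hz' hx (by omega) hy rfl
  have hne : ∀ {v}, v ∈ G.halfspace a b → G.dist v y ≠ 0 := fun hv h => by
    obtain rfl := hG.eq_of_dist_eq_zero h
    exact hy hv
  have := hne hx
  have := hne hz
  have : G.dist y z = G.dist z y := dist_comm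
  exact hy (hG.mem_halfspace_of_between_of_dist_eq_one hab hx hz (by omega) (by omega) (by omega))

theorem mem_halfspace_iff_of_between (hG : IsMedianGraph G) (hab : G.Adj a b)
    (hxz : x ∈ G.halfspace a b ↔ z ∈ G.halfspace a b)
    (hxyz : G.dist x y + G.dist y z = G.dist x z) :
    y ∈ G.halfspace a b ↔ x ∈ G.halfspace a b := by
  by_cases hx : x ∈ G.halfspace a b
  · exact iff_of_true (hG.mem_halfspace_of_between hab hx (hxz.1 hx) hxyz) hx
  · have hz : z ∉ G.halfspace a b := fun h => hx (hxz.2 h)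
    have hy := hG.mem_halfspace_of_between hab.symm ((hG.notMem_halfspace_iff hab).1 hx)
      ((hG.notMem_halfspace_iff hab).1 hz) hxyz
    exact iff_of_false ((hG.notMem_halfspace_iff hab).2 hy) hx

theorem halfspace_eq_of_mem_thetaClass (hG : IsMedianGraph G) (hab : G.Adj a b) {p q : V}
    (hpq : (p, q) ∈ G.thetaClass a b) (hp : p ∈ G.halfspace a b) :
    G.halfspace p q = G.halfspace a b := by
  obtain ⟨hadj, hside⟩ := (hG.mem_thetaClass_iff hab).1 hpq
  have hq : q ∉ G.halfspace a b := fun hq => hside (iff_of_true hp hq)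
  have hpq1 : G.dist p q = 1 := dist_eq_one_iff_adj.2 hadj
  have hqp1 : G.dist q p = 1 := dist_eq_one_iff_adj.2 hadj.symm
  ext v
  rw [mem_halfspace]
  constructor
  · intro hv
    by_contra hv'
    exact hv' ((hG.mem_halfspace_iff_of_between hab (iff_of_false hv' hq) (by omega)).1 hp)
  · intro hv
    refine (hG.dist_add_one_eq_or hadj v).resolve_right fun h => hq ?_
    exact (hG.mem_halfspace_iff_of_between hab (iff_of_true hv hp) (by omega)).2 hv

theorem thetaClass_eq_of_mem (hG : IsMedianGraph G) (hab : G.Adj a b) {p q : V}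
    (hpq : (p, q) ∈ G.thetaClass a b) : G.thetaClass p q = G.thetaClass a b := by
  wlog hp : p ∈ G.halfspace a b generalizing p q
  · have hq : q ∈ G.halfspace a b := by
      have := ((hG.mem_thetaClass_iff hab).1 hpq).2
      tauto
    rw [thetaClass_comm]
    exact this (hG.swap_mem_thetaClass hab hpq) hq
  have hadj := ((hG.mem_thetaClass_iff hab).1 hpq).1
  ext ⟨r, s⟩
  rw [hG.mem_thetaClass_iff hadj, hG.mem_thetaClass_iff hab,
    hG.halfspace_eq_of_mem_thetaClass hab hpq hp]

theorem exists_mem_of_adjTo (hG : IsMedianGraph G) {u : Set (V × V)} (hu : IsHyperplane G u)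
    {v : V} (hv : AdjTo G u v) : ∃ v', (v, v') ∈ u := by
  obtain ⟨a, b, hab, rfl⟩ := hu.exists_eq_thetaClass
  obtain ⟨⟨r, s⟩, hmem, rfl | rfl⟩ := hv
  · exact ⟨s, hmem⟩
  · exact ⟨r, hG.swap_mem_thetaClass hab hmem⟩

theorem dist_add_one_eq_of_mem_thetaClass (hG : IsMedianGraph G) (hab : G.Adj a b) {p q t : V}
    (hpq : (p, q) ∈ G.thetaClass a b) (hp : p ∈ G.halfspace a b) (ht : t ∈ G.halfspace a b) :
    G.dist t p + 1 = G.dist t q := by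
  rw [← mem_halfspace, hG.halfspace_eq_of_mem_thetaClass hab hpq hp]
  exact ht

theorem adjTo_of_between_of_mem_thetaClass (hG : IsMedianGraph G) (hab : G.Adj a b)
    {v v' x x' m : V} (hvv' : (v, v') ∈ G.thetaClass a b) (hxx' : (x, x') ∈ G.thetaClass a b)
    (hv : v ∈ G.halfspace a b) (hx : x ∈ G.halfspace a b)
    (hvmx : G.dist v m + G.dist m x = G.dist v x) : AdjTo G (G.thetaClass a b) m := by
  have hm := hG.mem_halfspace_of_between hab hv hx hvmx
  have hv' : v' ∉ G.halfspace a b := fun h =>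
    ((hG.mem_thetaClass_iff hab).1 hvv').2 (iff_of_true hv h)
  have hx' : x' ∉ G.halfspace a b := fun h =>
    ((hG.mem_thetaClass_iff hab).1 hxx').2 (iff_of_true hx h)
  have e1 := hG.dist_add_one_eq_of_mem_thetaClass hab hvv' hv hm
  have e2 := hG.dist_add_one_eq_of_mem_thetaClass hab hxx' hx hm
  have e3 := hG.dist_add_one_eq_of_mem_thetaClass hab hvv' hv hx
  have e4 : G.dist v' x' + 1 = G.dist v' x := by
    rw [thetaClass_comm] at hxx'
    exact hG.dist_add_one_eq_of_mem_thetaClass hab.symm (hG.swap_mem_thetaClass hab.symm hxx')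
      ((hG.notMem_halfspace_iff hab).1 hx') ((hG.notMem_halfspace_iff hab).1 hv')
  -- the median of `m, v', x'` is the neighbour of `m` across the hyperplane
  obtain ⟨μ, g1, g2, g3⟩ := hG.exists_median m v' x'
  have : G.dist v' μ = G.dist μ v' := dist_comm
  have : G.dist m v = G.dist v m := dist_comm
  have : G.dist x v = G.dist v x := dist_comm
  have : G.dist v' x = G.dist x v' := dist_comm
  have hmμ : G.dist m μ = 1 := by omega
  have hμ : μ ∉ G.halfspace a b := fun h => hv' <|
    (hG.mem_halfspace_iff_of_between hab (iff_of_false hv' hx') (by omega)).1 h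
  refine ⟨(m, μ), (hG.mem_thetaClass_iff hab).2 ⟨dist_eq_one_iff_adj.1 hmμ, ?_⟩, .inl rfl⟩
  exact fun h => hμ (h.1 hm)

theorem adjTo_of_between_of_mem_halfspace (hG : IsMedianGraph G) (hab : G.Adj a b)
    {v v' x m : V} (hvv' : (v, v') ∈ G.thetaClass a b) (hv : v ∈ G.halfspace a b)
    (hx : AdjTo G (G.thetaClass a b) x) (hm : m ∈ G.halfspace a b)
    (hvmx : G.dist v m + G.dist m x = G.dist v x) : AdjTo G (G.thetaClass a b) m := by
  obtain ⟨x', hxx'⟩ := hG.exists_mem_of_adjTo (isHyperplane_thetaClass hab) hx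
  by_cases hxH : x ∈ G.halfspace a b
  · exact hG.adjTo_of_between_of_mem_thetaClass hab hvv' hxx' hv hxH hvmx
  have hx'H : x' ∈ G.halfspace a b := by
    have := ((hG.mem_thetaClass_iff hab).1 hxx').2
    tauto
  have hx'x := hG.swap_mem_thetaClass hab hxx'
  have e1 := hG.dist_add_one_eq_of_mem_thetaClass hab hx'x hx'H hm
  have e2 := hG.dist_add_one_eq_of_mem_thetaClass hab hx'x hx'H hv
  have : G.dist v x ≤ G.dist v x' + G.dist x' x := hG.1.dist_triangle
  exact hG.adjTo_of_between_of_mem_thetaClass hab hvv' hx'x hv hx'H (by omega)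

theorem adjTo_of_between (hG : IsMedianGraph G) (hab : G.Adj a b) {v x m : V}
    (hv : AdjTo G (G.thetaClass a b) v) (hx : AdjTo G (G.thetaClass a b) x)
    (hvmx : G.dist v m + G.dist m x = G.dist v x) : AdjTo G (G.thetaClass a b) m := by
  wlog hm : m ∈ G.halfspace a b generalizing a b
  · rw [thetaClass_comm] at hv hx ⊢
    exact this hab.symm hv hx ((hG.notMem_halfspace_iff hab).1 hm)
  by_cases hvH : v ∈ G.halfspace a b
  · obtain ⟨v', hvv'⟩ := hG.exists_mem_of_adjTo (isHyperplane_thetaClass hab) hv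
    exact hG.adjTo_of_between_of_mem_halfspace hab hvv' hvH hx hm hvmx
  by_cases hxH : x ∈ G.halfspace a b
  · obtain ⟨x', hxx'⟩ := hG.exists_mem_of_adjTo (isHyperplane_thetaClass hab) hx
    exact hG.adjTo_of_between_of_mem_halfspace hab hxx' hxH hv hm (dist_add_dist_comm hvmx)
  exact absurd ((hG.mem_halfspace_iff_of_between hab (iff_of_false hvH hxH) hvmx).1 hm) hvH

theorem notMem_of_mem_of_ne (hG : IsMedianGraph G) {u t : Set (V × V)}
    (hu : IsHyperplane G u) (ht : IsHyperplane G t) (hne : u ≠ t) {e : V × V} (he : e ∈ t) :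
    e ∉ u := by
  obtain ⟨a, b, hab, rfl⟩ := hu.exists_eq_thetaClass
  obtain ⟨c, d, hcd, rfl⟩ := ht.exists_eq_thetaClass
  obtain ⟨p, q⟩ := e
  intro heu
  rw [← hG.thetaClass_eq_of_mem hab heu, ← hG.thetaClass_eq_of_mem hcd he] at hne
  exact hne rfl

theorem mem_halfspace_iff_of_notMem (hG : IsMedianGraph G) (hab : G.Adj a b) {p q : V}
    (hpq : G.Adj p q) (h : (p, q) ∉ G.thetaClass a b) :
    p ∈ G.halfspace a b ↔ q ∈ G.halfspace a b := by
  rw [hG.mem_thetaClass_iff hab] at h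
  tauto

variable {c d : V}

/-- The fourth corner of the square is the median of `x'`, `y` and `z₀`. -/
theorem exists_square (hG : IsMedianGraph G) (hab : G.Adj a b) (hcd : G.Adj c d)
    (hne : G.thetaClass a b ≠ G.thetaClass c d) {x x' y z₀ : V}
    (hxx' : (x, x') ∈ G.thetaClass a b) (hxy : (x, y) ∈ G.thetaClass c d)
    (hz₀ab : ¬(z₀ ∈ G.halfspace a b ↔ x ∈ G.halfspace a b))
    (hz₀cd : ¬(z₀ ∈ G.halfspace c d ↔ x ∈ G.halfspace c d)) :
    ∃ m, (y, m) ∈ G.thetaClass a b ∧ (x', m) ∈ G.thetaClass c d := by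
  have hu := isHyperplane_thetaClass hab
  have ht := isHyperplane_thetaClass hcd
  obtain ⟨hadj, hx'ab⟩ := (hG.mem_thetaClass_iff hab).1 hxx'
  obtain ⟨hadj', hycd⟩ := (hG.mem_thetaClass_iff hcd).1 hxy
  have hyab := hG.mem_halfspace_iff_of_notMem hab hadj' (hG.notMem_of_mem_of_ne hu ht hne hxy)
  have hx'cd := hG.mem_halfspace_iff_of_notMem hcd hadj
    (hG.notMem_of_mem_of_ne ht hu hne.symm hxx')
  have hx'y : G.dist x' y = 2 := by
    have : G.dist x' y ≤ G.dist x' x + G.dist x y := hG.1.dist_triangle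
    have : G.dist x' x = 1 := dist_eq_one_iff_adj.2 hadj.symm
    have : G.dist x y = 1 := dist_eq_one_iff_adj.2 hadj'
    have : G.dist x' y ≠ 0 := fun h => by
      obtain rfl := hG.eq_of_dist_eq_zero h
      exact hx'ab hyab
    have : G.dist x' y ≠ 1 := fun h => by
      have hadj'' := dist_eq_one_iff_adj.1 h
      refine hG.notMem_of_mem_of_ne ht hu hne.symm
        ((hG.mem_thetaClass_iff hab).2 ⟨hadj'', fun h => hx'ab (hyab.trans h.symm)⟩)
        ((hG.mem_thetaClass_iff hcd).2 ⟨hadj'', fun h => hycd (hx'cd.trans h)⟩)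
    omega
  obtain ⟨m, h1, h2, h3⟩ := hG.exists_median x' y z₀
  have hmab := hG.mem_halfspace_iff_of_between hab
    ((not_iff.1 hx'ab).symm.trans (not_iff.1 (mt Iff.symm hz₀ab))) h2
  have hmcd := hG.mem_halfspace_iff_of_between hcd
    ((not_iff.1 hycd).symm.trans (not_iff.1 (mt Iff.symm hz₀cd))) h3
  have hx'm : G.dist x' m ≠ 0 := fun h => by
    obtain rfl := hG.eq_of_dist_eq_zero h
    exact hycd (hx'cd.trans hmcd)
  have hmy : G.dist m y ≠ 0 := fun h => by
    obtain rfl := hG.eq_of_dist_eq_zero h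
    exact hx'ab (hyab.trans hmab)
  refine ⟨m, (hG.mem_thetaClass_iff hab).2 ⟨dist_eq_one_iff_adj.1 ?_, fun h =>
    hx'ab (hyab.trans (h.trans hmab))⟩, (hG.mem_thetaClass_iff hcd).2
    ⟨dist_eq_one_iff_adj.1 ?_, fun h => hycd (hx'cd.trans (h.trans hmcd))⟩⟩
  · rw [dist_comm]
    omega
  · omega

theorem exists_opposite_of_transverse (hG : IsMedianGraph G) (hab : G.Adj a b)
    (hcd : G.Adj c d) (hne : G.thetaClass a b ≠ G.thetaClass c d)
    (htv : Transverse G (G.thetaClass a b) (G.thetaClass c d)) (x : V) :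
    ∃ z, ¬(z ∈ G.halfspace a b ↔ x ∈ G.halfspace a b) ∧
      ¬(z ∈ G.halfspace c d ↔ x ∈ G.halfspace c d) := by
  have hu := isHyperplane_thetaClass hab
  have ht := isHyperplane_thetaClass hcd
  obtain ⟨A, B, C, D, hAB, -, hAC, hBD, -, -, aAC, aBD⟩ := htv
  have sAB := ((hG.mem_thetaClass_iff hab).1 hAB).2
  have sAC := hG.mem_halfspace_iff_of_notMem hab aAC (hG.notMem_of_mem_of_ne hu ht hne hAC)
  have sBD := hG.mem_halfspace_iff_of_notMem hab aBD (hG.notMem_of_mem_of_ne hu ht hne hBD)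
  have row : ∀ {p q}, (p, q) ∈ G.thetaClass c d → (p ∈ G.halfspace a b ↔ q ∈ G.halfspace a b) →
      ¬(p ∈ G.halfspace a b ↔ x ∈ G.halfspace a b) → ∃ z,
        ¬(z ∈ G.halfspace a b ↔ x ∈ G.halfspace a b) ∧
        ¬(z ∈ G.halfspace c d ↔ x ∈ G.halfspace c d) := by
    intro p q hpq hpqab hp
    have hpqcd := ((hG.mem_thetaClass_iff hcd).1 hpq).2
    by_cases h : p ∈ G.halfspace c d ↔ x ∈ G.halfspace c d
    · exact ⟨q, fun hq => hp (hpqab.trans hq), fun hq => hpqcd (h.trans hq.symm)⟩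
    · exact ⟨p, hp, h⟩
  by_cases h : A ∈ G.halfspace a b ↔ x ∈ G.halfspace a b
  · exact row hBD sBD fun hB => sAB (h.trans hB.symm)
  · exact row hAC sAC h

theorem transverse_of_adjTo (hG : IsMedianGraph G) {u t : Set (V × V)}
    (hu : IsHyperplane G u) (ht : IsHyperplane G t) (hne : u ≠ t) {p q : V} (hpq : (p, q) ∈ t)
    (hp : AdjTo G u p) (hq : AdjTo G u q) : Transverse G u t := by
  obtain ⟨a, b, hab, rfl⟩ := hu.exists_eq_thetaClass
  obtain ⟨c, d, hcd, rfl⟩ := ht.exists_eq_thetaClass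
  obtain ⟨p', hpp'⟩ := hG.exists_mem_of_adjTo (isHyperplane_thetaClass hab) hp
  obtain ⟨q', hqq'⟩ := hG.exists_mem_of_adjTo (isHyperplane_thetaClass hab) hq
  obtain ⟨hadj, hpqcd⟩ := (hG.mem_thetaClass_iff hcd).1 hpq
  have hpqab := hG.mem_halfspace_iff_of_notMem hab hadj (hG.notMem_of_mem_of_ne hu ht hne hpq)
  obtain ⟨hadj', hqq'ab⟩ := (hG.mem_thetaClass_iff hab).1 hqq'
  have hqq'cd := hG.mem_halfspace_iff_of_notMem hcd hadj'
    (hG.notMem_of_mem_of_ne ht hu hne.symm hqq')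
  obtain ⟨m, hqm, hp'm⟩ := hG.exists_square hab hcd hne hpp' hpq
    (fun h => hqq'ab (hpqab.symm.trans h.symm)) (fun h => hpqcd (h.symm.trans hqq'cd.symm))
  exact ⟨p, p', q, m, hpp', hqm, hpq, hp'm, hpp'.1, hqm.1, hadj, hp'm.1⟩

theorem adjTo_of_transverse (hG : IsMedianGraph G) {u t : Set (V × V)}
    (hu : IsHyperplane G u) (ht : IsHyperplane G t) (hne : u ≠ t) (htv : Transverse G u t)
    {x x' y : V} (hxx' : (x, x') ∈ u) (hxy : (x, y) ∈ t) : AdjTo G u y := by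
  obtain ⟨a, b, hab, rfl⟩ := hu.exists_eq_thetaClass
  obtain ⟨c, d, hcd, rfl⟩ := ht.exists_eq_thetaClass
  obtain ⟨z₀, hz₀ab, hz₀cd⟩ := hG.exists_opposite_of_transverse hab hcd hne htv x
  obtain ⟨m, hym, -⟩ := hG.exists_square hab hcd hne hxx' hxy hz₀ab hz₀cd
  exact ⟨(y, m), hym, .inl rfl⟩

theorem adjTo_of_forall_transverse (hG : IsMedianGraph G) {u w : Set (V × V)}
    (hu : IsHyperplane G u) (hw : IsHyperplane G w) (hne : u ≠ w) (huw : Transverse G u w)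
    (hall : ∀ t, IsHyperplane G t → t ≠ u → Transverse G t w → Transverse G u t)
    {v : V} (hv : AdjTo G w v) : AdjTo G u v := by
  obtain ⟨c, d, hcd, rfl⟩ := hw.exists_eq_thetaClass
  obtain ⟨_, _, _, -, hAB, -, hAC, -⟩ := id huw
  refine hG.1.induction_on_convex (S := {v | AdjTo G (G.thetaClass c d) v}) (P := AdjTo G u)
    (fun _ _ _ hv hx hvmx => hG.adjTo_of_between hcd hv hx hvmx) ⟨_, hAC, .inl rfl⟩
    ⟨_, hAB, .inl rfl⟩ (fun y z hy hz hyz hyu => ?_) hv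
  obtain ⟨y', hyy'⟩ := hG.exists_mem_of_adjTo hu hyu
  have hyzt := hG.mem_thetaClass_self hyz
  have ht := isHyperplane_thetaClass hyz
  by_cases htu : G.thetaClass y z = u
  · exact ⟨(y, z), htu ▸ hyzt, .inr rfl⟩
  by_cases htw : G.thetaClass y z = G.thetaClass c d
  · exact hG.adjTo_of_transverse hu hw hne huw hyy' (htw ▸ hyzt)
  have hwt := hG.transverse_of_adjTo hw ht (Ne.symm htw) hyzt hy hz
  exact hG.adjTo_of_transverse hu ht (Ne.symm htu) (hall _ ht htu hwt.symm) hyy' hyzt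

theorem mem_Ical_iff (hG : IsMedianGraph G) {u w : Set (V × V)} (hw : IsHyperplane G w)
    (hne : u ≠ w) :
    u ∈ Ical G w ↔ IsHyperplane G u ∧ Transverse G u w ∧
      ∀ t, IsHyperplane G t → t ≠ u → Transverse G t w → Transverse G u t := by
  constructor
  · rintro ⟨hu, hcar⟩
    obtain ⟨c, d, hcd, rfl⟩ := hw.exists_eq_thetaClass
    have hcdw := hG.mem_thetaClass_self hcd
    refine ⟨hu, hG.transverse_of_adjTo hu hw hne hcdw (hcar c ⟨_, hcdw, .inl rfl⟩)
      (hcar d ⟨_, hcdw, .inr rfl⟩), fun t ht htu htw => ?_⟩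
    obtain ⟨A, B, _, _, hAB, -, hAC, hBD, -⟩ := htw
    exact hG.transverse_of_adjTo hu ht htu.symm hAB (hcar A ⟨_, hAC, .inl rfl⟩)
      (hcar B ⟨_, hBD, .inl rfl⟩)
  · rintro ⟨hu, huw, hall⟩
    exact ⟨hu, fun v hv => hG.adjTo_of_forall_transverse hu hw hne huw hall hv⟩

theorem pairwise_transverse_Ical (hG : IsMedianGraph G) {w : Set (V × V)}
    (hw : IsHyperplane G w) : (Ical G w).Pairwise (Transverse G) := by
  have key : ∀ u ∈ Ical G w, u ≠ w → Transverse G u w ∧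
      ∀ t, IsHyperplane G t → t ≠ u → Transverse G t w → Transverse G u t :=
    fun u hu hne => ((hG.mem_Ical_iff hw hne).1 hu).2
  intro u hu u' hu' hne
  obtain rfl | hu'w := eq_or_ne u' w
  · exact (key u hu hne).1
  obtain rfl | huw := eq_or_ne u w
  · exact (key u' hu' hu'w).1.symm
  exact (key u hu huw).2 u' hu'.1 hne.symm (key u' hu' hu'w).1

end IsMedianGraph

/-- `u ∈ I(w)` iff `u` is transverse to `w` and to every other hyperplane
transverse to `w`; consequently the elements of `I(w)` are pairwise transverse and
`#I(w) ≤ dim X`. -/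
theorem Ical_characterization (G : SimpleGraph V) (hG : IsMedianGraph G) (n : ℕ)
    (hdim : ∀ S : Finset (Set (V × V)), (∀ h ∈ S, IsHyperplane G h) →
      (S : Set (Set (V × V))).Pairwise (Transverse G) → S.card ≤ n)
    (w : Set (V × V)) (hw : IsHyperplane G w) :
    (∀ u : Set (V × V), u ≠ w →
      (u ∈ Ical G w ↔ IsHyperplane G u ∧ Transverse G u w ∧
        ∀ t, IsHyperplane G t → t ≠ u → Transverse G t w → Transverse G u t)) ∧
    (Ical G w).Pairwise (Transverse G) ∧
    (Ical G w).Finite ∧ (Ical G w).ncard ≤ n := by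
  have hpair := hG.pairwise_transverse_Ical hw
  exact ⟨fun u hne => hG.mem_Ical_iff hw hne, hpair, Set.finite_and_ncard_le_of_forall_finset
    fun T hT => hdim T (fun u hu => (hT hu).1) (hpair.mono hT)⟩
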